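/- arXiv:1508.01759 — 2 statements merged into one kernel-verified Lean document; each statement's English description precedes it below -/
import Mathlib

section
/- If G is a finite graph of order n and maximum degree at most 3 such that no connected component of G is isomorphic to K₄, then W^+(G) ≥ 2n/3, with equality if and only if G contains a spanning collection of n/3 pairwise vertex-disjoint triangles (i.e., G contains (n/3)·K₃ as a subgraph). -/
open SimpleGraph

/-- A K₃-WORM coloring of `G`: every triangle receives exactly two colors. -/
def IsWormColoring {V : Type*} (G : SimpleGraph V) (c : V → ℕ) : Prop :=
  ∀ u v w : V, G.Adj u v → G.Adj u w → G.Adj v w → ({c u, c v, c w} : Finset ℕ).card = 2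

/-- The number of colors used by a coloring of a finite vertex set. -/
def colorsUsed {V : Type*} [Fintype V] (c : V → ℕ) : ℕ := (Finset.univ.image c).card

/-- The K₃-WORM feasible set of `G`: the set of `s` such that `G` has a
K₃-WORM coloring using exactly `s` colors. -/
def wormFeasible {V : Type*} [Fintype V] (G : SimpleGraph V) : Set ℕ :=
  {s | ∃ c : V → ℕ, IsWormColoring G c ∧ colorsUsed c = s}

/-- `G` is triangle-free: it has no three pairwise adjacent vertices. -/
def TriangleFree {V : Type*} (G : SimpleGraph V) : Prop :=
  ∀ u v w : V, G.Adj u v → G.Adj u w → G.Adj v w → False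

/-- The strong product `G ⊠ K₂`, on vertex set `V × Bool`:
`(u,i)` and `(v,j)` are adjacent iff (`u = v` and `i ≠ j`) or `u`,`v` are adjacent in `G`. -/
def strongProdK2 {V : Type*} (G : SimpleGraph V) : SimpleGraph (V × Bool) :=
  SimpleGraph.fromRel (fun p q => (p.1 = q.1 ∧ p.2 ≠ q.2) ∨ G.Adj p.1 q.1)

/-! In a graph of maximum degree at most 3 without `K₄` components, two distinct triangles that
meet share exactly one edge, and no triangle shares an edge with two others. So one can choose an
edge in every triangle such that meeting triangles choose their common edge. The chosen edges are
pairwise disjoint and the third vertex of a triangle lies on none of them, so merging the ends of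
each chosen edge is a K₃-WORM coloring with `n - m` colors, `m` the number of chosen edges. One
triangle per chosen edge gives `m` disjoint triangles, so `3m ≤ n` and `W⁺(G) ≥ n - m ≥ 2n/3`; if
`W⁺(G) = 2n/3` then `3m = n` and these triangles cover `G`. Conversely, a WORM coloring uses at
most two colors on each triangle of a triangle factor. -/

namespace SimpleGraph

open Finset

variable {V : Type*} {G : SimpleGraph V}

section Triangles

variable [DecidableEq V]

lemma isNClique_four_of_three_triangles {S T₁ T₂ T₃ : Finset V} (hS : S.card = 4)
    (hT₁ : G.IsNClique 3 T₁) (hT₂ : G.IsNClique 3 T₂) (hT₃ : G.IsNClique 3 T₃)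
    (hT₁S : T₁ ⊆ S) (hT₂S : T₂ ⊆ S) (hT₃S : T₃ ⊆ S)
    (h₁₂ : T₁ ≠ T₂) (h₁₃ : T₁ ≠ T₃) (h₂₃ : T₂ ≠ T₃) : G.IsNClique 4 S := by
  refine ⟨fun u hu v hv huv => ?_, hS⟩
  -- otherwise each `Tᵢ` misses `u` or `v`, so is `S.erase u` or `S.erase v`: two coincide
  by_contra hnadj
  have hmiss : ∀ T, G.IsNClique 3 T → T ⊆ S → T = S.erase u ∨ T = S.erase v := by
    intro T hT hTS
    have hcomp : ∀ x ∈ S, x ∉ T → T = S.erase x := fun x hx hxT =>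
      eq_of_subset_of_card_le (subset_erase.mpr ⟨hTS, hxT⟩)
        (by rw [card_erase_of_mem hx, hS, hT.2])
    by_cases huT : u ∈ T
    · exact .inr (hcomp v hv fun hvT => hnadj (hT.1 huT hvT huv))
    · exact .inl (hcomp u hu huT)
  rcases hmiss T₁ hT₁ hT₁S with h₁ | h₁ <;> rcases hmiss T₂ hT₂ hT₂S with h₂ | h₂ <;>
    rcases hmiss T₃ hT₃ hT₃S with h₃ | h₃ <;>
    first
      | exact h₁₂ (h₁.trans h₂.symm)
      | exact h₁₃ (h₁.trans h₃.symm)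
      | exact h₂₃ (h₂.trans h₃.symm)

def IsCoherentEdgeChoice (G : SimpleGraph V) (e : Finset V → Finset V) : Prop :=
  ∀ T, G.IsNClique 3 T → e T ⊆ T ∧ (e T).card = 2 ∧
    ∀ T', G.IsNClique 3 T' → T ≠ T' → (T ∩ T').Nonempty → e T = T ∩ T'

namespace IsCoherentEdgeChoice

variable {e : Finset V → Finset V} {T T' : Finset V}

lemma eq_of_not_disjoint (he : G.IsCoherentEdgeChoice e) (hT : G.IsNClique 3 T)
    (hT' : G.IsNClique 3 T') (hmeet : ¬ Disjoint T T') : e T = e T' := by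
  rw [not_disjoint_iff_nonempty_inter] at hmeet
  obtain rfl | hne := eq_or_ne T T'
  · rfl
  rw [(he T hT).2.2 T' hT' hne hmeet, (he T' hT').2.2 T hT hne.symm (inter_comm T T' ▸ hmeet),
    inter_comm]

lemma exists_apex (he : G.IsCoherentEdgeChoice e) (hT : G.IsNClique 3 T) :
    ∃ t, T = insert t (e T) ∧ ∀ T', G.IsNClique 3 T' → t ∉ e T' := by
  obtain ⟨heT, hcard, -⟩ := he T hT
  obtain ⟨t, ht⟩ : ∃ t, T \ e T = {t} :=
    card_eq_one.mp (by rw [card_sdiff_of_subset heT, hT.2, hcard])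
  have htT : t ∈ T ∧ t ∉ e T := mem_sdiff.mp (ht ▸ mem_singleton_self t)
  refine ⟨t, by rw [insert_eq, ← ht, sdiff_union_of_subset heT], fun T' hT' htT' => ?_⟩
  have hmeet : ¬ Disjoint T T' := not_disjoint_iff.mpr ⟨t, htT.1, (he T' hT').1 htT'⟩
  exact htT.2 (he.eq_of_not_disjoint hT hT' hmeet ▸ htT')

end IsCoherentEdgeChoice

end Triangles

section Subcubic

variable [DecidableEq V] [G.LocallyFinite]

lemma card_le_four_of_forall_adj (hdeg : ∀ v, G.degree v ≤ 3) {a : V} {s : Finset V}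
    (ha : a ∈ s) (hadj : ∀ x ∈ s, x ≠ a → G.Adj a x) : s.card ≤ 4 := by
  have hsub : s.erase a ⊆ G.neighborFinset a := fun x hx =>
    (mem_neighborFinset G a x).mpr (hadj x (mem_of_mem_erase hx) (ne_of_mem_erase hx))
  have := card_le_card hsub
  rw [card_neighborFinset_eq_degree, card_erase_of_mem ha] at this
  have := hdeg a
  omega

lemma IsNClique.mem_of_adj (hdeg : ∀ v, G.degree v ≤ 3) {S : Finset V} (hS : G.IsNClique 4 S)
    {a b : V} (ha : a ∈ S) (hab : G.Adj a b) : b ∈ S := by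
  by_contra hb
  have hadj : ∀ x ∈ insert b S, x ≠ a → G.Adj a x := by
    intro x hx hxa
    rcases mem_insert.mp hx with rfl | hx
    · exact hab
    · exact hS.1 ha hx hxa.symm
  have := card_le_four_of_forall_adj hdeg (mem_insert_of_mem ha) hadj
  rw [card_insert_of_notMem hb, hS.2] at this
  omega

lemma IsNClique.supp_connectedComponentMk (hdeg : ∀ v, G.degree v ≤ 3) {S : Finset V}
    (hS : G.IsNClique 4 S) {a : V} (ha : a ∈ S) : (G.connectedComponentMk a).supp = S := by
  have hwalk : ∀ {u x : V}, G.Walk u x → u ∈ S → x ∈ S := by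
    intro u x p
    induction p with
    | nil => exact id
    | cons h _ ih => exact fun hu => ih (hS.mem_of_adj hdeg hu h)
  ext x
  rw [ConnectedComponent.mem_supp_iff, ConnectedComponent.eq, mem_coe]
  refine ⟨fun ⟨p⟩ => hwalk p.reverse ha, fun hx => ?_⟩
  obtain rfl | hxa := eq_or_ne x a
  · rfl
  · exact (hS.1 hx ha hxa).reachable

lemma cliqueFree_four_of_degree_le_three (hdeg : ∀ v, G.degree v ≤ 3)
    (hK4 : ∀ C : G.ConnectedComponent,
      ¬ Nonempty (G.induce C.supp ≃g (⊤ : SimpleGraph (Fin 4)))) :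
    G.CliqueFree 4 := by
  intro S hS
  obtain ⟨a, ha⟩ : S.Nonempty := card_pos.mp (by rw [hS.2]; norm_num)
  have hsupp := hS.supp_connectedComponentMk hdeg ha
  have htop : G.induce (G.connectedComponentMk a).supp = ⊤ := induce_eq_top.mpr (hsupp ▸ hS.1)
  refine hK4 (G.connectedComponentMk a) ⟨?_⟩
  rw [htop]
  exact Iso.completeGraph ((Equiv.setCongr hsupp).trans (S.equivFinOfCardEq hS.2))

lemma two_le_card_inter_of_isNClique_three (hdeg : ∀ v, G.degree v ≤ 3) {T T' : Finset V}
    (hT : G.IsNClique 3 T) (hT' : G.IsNClique 3 T') (hmeet : (T ∩ T').Nonempty) :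
    2 ≤ (T ∩ T').card := by
  obtain ⟨a, ha⟩ := hmeet
  have hunion : (T ∪ T').card ≤ 4 := by
    refine card_le_four_of_forall_adj hdeg (mem_union_left _ (mem_inter.mp ha).1) ?_
    intro x hx hxa
    rcases mem_union.mp hx with hx | hx
    · exact hT.1 (mem_inter.mp ha).1 hx hxa.symm
    · exact hT'.1 (mem_inter.mp ha).2 hx hxa.symm
  have := card_union_add_card_inter T T'
  rw [hT.2, hT'.2] at this
  omega

lemma card_inter_eq_two_of_isNClique_three (hdeg : ∀ v, G.degree v ≤ 3) {T T' : Finset V}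
    (hT : G.IsNClique 3 T) (hT' : G.IsNClique 3 T') (hne : T ≠ T')
    (hmeet : (T ∩ T').Nonempty) : (T ∩ T').card = 2 := by
  have hle : (T ∩ T').card ≤ 3 := hT.2 ▸ card_le_card inter_subset_left
  have hne3 : (T ∩ T').card ≠ 3 := fun h3 => hne <| by
    have hleft : T ∩ T' = T := eq_of_subset_of_card_le inter_subset_left (by rw [h3, hT.2])
    have hright : T ∩ T' = T' := eq_of_subset_of_card_le inter_subset_right (by rw [h3, hT'.2])
    exact hleft.symm.trans hright
  have := two_le_card_inter_of_isNClique_three hdeg hT hT' hmeet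
  omega

lemma eq_of_card_inter_eq_two (hdeg : ∀ v, G.degree v ≤ 3) (h4 : G.CliqueFree 4)
    {T T₁ T₂ : Finset V} (hT : G.IsNClique 3 T) (hT₁ : G.IsNClique 3 T₁)
    (hT₂ : G.IsNClique 3 T₂) (h₁ : T ≠ T₁) (h₂ : T ≠ T₂)
    (hc₁ : (T ∩ T₁).card = 2) (hc₂ : (T ∩ T₂).card = 2) : T₁ = T₂ := by
  -- the edges `T ∩ T₁`, `T ∩ T₂` of `T` share a vertex `a`, adjacent to all of `T ∪ T₁ ∪ T₂`;
  -- so this union has only 4 vertices, and the three triangles in it make it a `K₄`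
  by_contra h₁₂
  obtain ⟨a, ha⟩ : ((T ∩ T₁) ∩ (T ∩ T₂)).Nonempty := by
    rw [← card_pos]
    have hunion : ((T ∩ T₁) ∪ (T ∩ T₂)).card ≤ 3 :=
      hT.2 ▸ card_le_card (union_subset inter_subset_left inter_subset_left)
    have := card_union_add_card_inter (T ∩ T₁) (T ∩ T₂)
    omega
  simp only [mem_inter] at ha
  have hS : (T ∪ T₁ ∪ T₂).card ≤ 4 := by
    refine card_le_four_of_forall_adj hdeg (a := a) (by simp [ha.1.1]) fun x hx hxa => ?_
    simp only [mem_union] at hx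
    rcases hx with (hx | hx) | hx
    · exact hT.1 ha.1.1 hx hxa.symm
    · exact hT₁.1 ha.1.2 hx hxa.symm
    · exact hT₂.1 ha.2.2 hx hxa.symm
  have hT₁' : (T ∪ T₁).card = 4 := by
    have := card_union_add_card_inter T T₁
    rw [hT.2, hT₁.2, hc₁] at this
    omega
  have hS4 : (T ∪ T₁ ∪ T₂).card = 4 :=
    le_antisymm hS (hT₁' ▸ card_le_card subset_union_left)
  exact h4 _ <| isNClique_four_of_three_triangles hS4 hT hT₁ hT₂
    (subset_union_left.trans subset_union_left) (subset_union_right.trans subset_union_left)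
    subset_union_right h₁ h₂ h₁₂

lemma exists_isCoherentEdgeChoice (hdeg : ∀ v, G.degree v ≤ 3) (h4 : G.CliqueFree 4) :
    ∃ e, G.IsCoherentEdgeChoice e := by
  suffices h : ∀ T, G.IsNClique 3 T → ∃ e ⊆ T, e.card = 2 ∧
      ∀ T', G.IsNClique 3 T' → T ≠ T' → (T ∩ T').Nonempty → e = T ∩ T' by
    choose! e he using h
    exact ⟨e, fun T hT => ⟨(he T hT).1, (he T hT).2⟩⟩
  intro T hT
  by_cases hpartner : ∃ T₁, G.IsNClique 3 T₁ ∧ T ≠ T₁ ∧ (T ∩ T₁).Nonempty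
  · obtain ⟨T₁, hT₁, hne, hmeet⟩ := hpartner
    have hc₁ := card_inter_eq_two_of_isNClique_three hdeg hT hT₁ hne hmeet
    refine ⟨T ∩ T₁, inter_subset_left, hc₁, fun T' hT' hne' hmeet' => ?_⟩
    rw [eq_of_card_inter_eq_two hdeg h4 hT hT₁ hT' hne hne' hc₁
      (card_inter_eq_two_of_isNClique_three hdeg hT hT' hne' hmeet')]
  · obtain ⟨e, heT, he⟩ := exists_subset_card_eq (s := T) (n := 2) (by rw [hT.2]; norm_num)
    exact ⟨e, heT, he, fun T' hT' hne hmeet => (hpartner ⟨T', hT', hne, hmeet⟩).elim⟩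

end Subcubic

end SimpleGraph

section Blocks

open Finset

variable {V : Type*} [DecidableEq V] {M : Finset (Finset V)} {p : Finset V} {v : V}

/-- For pairwise disjoint `M`: the member of `M` containing `v`, or `{v}` if there is none. -/
def blockOf (M : Finset (Finset V)) (v : V) : Finset V :=
  insert v ((M.filter (v ∈ ·)).biUnion id)

lemma blockOf_eq_of_mem (hM : (M : Set (Finset V)).PairwiseDisjoint id) (hp : p ∈ M)
    (hv : v ∈ p) : blockOf M v = p := by
  have hunion : (M.filter (v ∈ ·)).biUnion id = p := by
    ext x
    simp only [mem_biUnion, mem_filter, id]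
    refine ⟨fun ⟨q, ⟨hq, hvq⟩, hxq⟩ => ?_, fun hx => ⟨p, ⟨hp, hv⟩, hx⟩⟩
    rwa [hM.elim_finset hq hp v hvq hv] at hxq
  rw [blockOf, hunion, insert_eq_of_mem hv]

lemma blockOf_eq_singleton (hv : ∀ p ∈ M, v ∉ p) : blockOf M v = {v} := by
  rw [blockOf, filter_false_of_mem hv, biUnion_empty, insert_empty]

lemma card_sup_id_eq_mul {𝒯 : Finset (Finset V)} {k : ℕ}
    (hdisj : (𝒯 : Set (Finset V)).PairwiseDisjoint id) (hk : ∀ T ∈ 𝒯, T.card = k) :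
    (𝒯.sup id).card = 𝒯.card * k := by
  rw [sup_eq_biUnion, card_biUnion hdisj]
  exact sum_const_nat hk

variable [Fintype V]

noncomputable def blockColoring (M : Finset (Finset V)) (v : V) : ℕ :=
  Fintype.equivFin (Finset V) (blockOf M v)

lemma card_image_blockColoring (s : Finset V) :
    (s.image (blockColoring M)).card = (s.image (blockOf M)).card := by
  rw [← card_image_of_injective (s.image (blockOf M))
    (Fin.val_injective.comp (Fintype.equivFin (Finset V)).injective), image_image]
  rfl

lemma isWormColoring_blockColoring {G : SimpleGraph V}
    (hM : (M : Set (Finset V)).PairwiseDisjoint id) (hne : ∀ p ∈ M, p.Nonempty)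
    (htri : ∀ T, G.IsNClique 3 T → ∃ p ∈ M, ∃ t, T = insert t p ∧ ∀ q ∈ M, t ∉ q) :
    IsWormColoring G (blockColoring M) := by
  intro u v w huv huw hvw
  obtain ⟨p, hp, t, hT, ht⟩ := htri {u, v, w} (is3Clique_triple_iff.mpr ⟨huv, huw, hvw⟩)
  have himg : ({u, v, w} : Finset V).image (blockOf M) = {{t}, p} := by
    rw [hT, image_insert, blockOf_eq_singleton ht,
      image_congr (g := fun _ => p) fun x hx => blockOf_eq_of_mem hM hp hx, image_const (hne p hp)]
  have hsingle : ({t} : Finset V) ≠ p := fun h => ht p hp (h ▸ mem_singleton_self t)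
  calc ({blockColoring M u, blockColoring M v, blockColoring M w} : Finset ℕ).card
      = (({u, v, w} : Finset V).image (blockColoring M)).card := by
        simp only [image_insert, image_singleton]
    _ = 2 := by rw [card_image_blockColoring, himg, card_pair hsingle]

lemma card_le_colorsUsed_blockColoring_add (hM : (M : Set (Finset V)).PairwiseDisjoint id)
    (hM2 : ∀ p ∈ M, p.card = 2) :
    Fintype.card V ≤ colorsUsed (blockColoring M) + M.card := by
  set U := M.biUnion id
  have hU : U.card = M.card * 2 := by rw [card_biUnion hM]; exact sum_const_nat hM2
  have hsub : M ∪ (univ \ U).image singleton ⊆ univ.image (blockOf M) := by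
    intro q hq
    rcases mem_union.mp hq with hq | hq
    · obtain ⟨v, hv⟩ := card_pos.mp (by rw [hM2 q hq]; norm_num)
      exact mem_image.mpr ⟨v, mem_univ v, blockOf_eq_of_mem hM hq hv⟩
    · obtain ⟨v, hv, rfl⟩ := mem_image.mp hq
      have hv' : ∀ p ∈ M, v ∉ p := fun p hp hvp =>
        (mem_sdiff.mp hv).2 (mem_biUnion.mpr ⟨p, hp, hvp⟩)
      exact mem_image.mpr ⟨v, mem_univ v, blockOf_eq_singleton hv'⟩
  have hdisj : Disjoint M ((univ \ U).image singleton) := by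
    refine disjoint_left.mpr fun q hq hq' => ?_
    obtain ⟨v, -, rfl⟩ := mem_image.mp hq'
    simpa using hM2 _ hq
  have := card_le_card hsub
  rw [card_union_of_disjoint hdisj, card_image_of_injective _ singleton_injective,
    card_univ_sdiff, hU, ← card_image_blockColoring, ← colorsUsed] at this
  have hUle : U.card ≤ Fintype.card V := card_le_univ U
  omega

end Blocks

section WormColorings

open Finset

variable {V : Type*} [Fintype V] [DecidableEq V] {G : SimpleGraph V}

lemma SimpleGraph.IsCoherentEdgeChoice.exists_wormColoring {e : Finset V → Finset V}
    (he : G.IsCoherentEdgeChoice e) :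
    ∃ 𝒯 : Finset (Finset V), (∀ T ∈ 𝒯, G.IsNClique 3 T) ∧
      (𝒯 : Set (Finset V)).PairwiseDisjoint id ∧
      ∃ c, IsWormColoring G c ∧ Fintype.card V ≤ colorsUsed c + 𝒯.card := by
  classical
  -- one triangle for each chosen edge
  obtain ⟨𝒯, h𝒯, hinj, himg⟩ := exists_subset_injOn_image_eq_of_surjOn (G.cliqueSet 3)
    ((G.cliqueFinset 3).image e) (by rw [coe_image, coe_cliqueFinset]; exact Set.surjOn_image e _)
  have htri : ∀ T ∈ 𝒯, G.IsNClique 3 T := fun T hT => h𝒯 hT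
  set M := 𝒯.image e
  have hM2 : ∀ p ∈ M, p.card = 2 := by
    intro p hp
    obtain ⟨T, hT, rfl⟩ := mem_image.mp hp
    exact (he T (htri T hT)).2.1
  have hdisj : (𝒯 : Set (Finset V)).PairwiseDisjoint id := fun T hT T' hT' hne =>
    not_not.mp fun hmeet =>
      hne (hinj hT hT' (he.eq_of_not_disjoint (htri T hT) (htri T' hT') hmeet))
  have hdisjM : (M : Set (Finset V)).PairwiseDisjoint id := by
    intro p hp q hq hpq
    obtain ⟨T, hT, rfl⟩ := mem_image.mp (mem_coe.mp hp)
    obtain ⟨T', hT', rfl⟩ := mem_image.mp (mem_coe.mp hq)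
    exact (hdisj hT hT' fun h => hpq (h ▸ rfl)).mono (he T (htri T hT)).1 (he T' (htri T' hT')).1
  have hapex : ∀ T, G.IsNClique 3 T → ∃ p ∈ M, ∃ t, T = insert t p ∧ ∀ q ∈ M, t ∉ q := by
    intro T hT
    obtain ⟨t, hTt, ht⟩ := he.exists_apex hT
    refine ⟨e T, himg ▸ mem_image_of_mem e (mem_cliqueFinset_iff.mpr hT), t, hTt, fun q hq => ?_⟩
    obtain ⟨T', hT', rfl⟩ := mem_image.mp hq
    exact ht T' (htri T' hT')
  refine ⟨𝒯, htri, hdisj, blockColoring M, isWormColoring_blockColoring hdisjM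
    (fun p hp => card_pos.mp (by rw [hM2 p hp]; norm_num)) hapex, ?_⟩
  have := card_le_colorsUsed_blockColoring_add hdisjM hM2
  rwa [card_image_of_injOn hinj] at this

lemma three_mul_colorsUsed_le_of_finpartition {c : V → ℕ} (hc : IsWormColoring G c)
    (P : Finpartition (univ : Finset V))
    (hP : ∀ t ∈ P.parts, t.card = 3 ∧ ∀ u ∈ t, ∀ v ∈ t, u ≠ v → G.Adj u v) :
    3 * colorsUsed c ≤ 2 * Fintype.card V := by
  have htwo : ∀ t ∈ P.parts, (t.image c).card = 2 := by
    intro t ht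
    obtain ⟨h3, hadj⟩ := hP t ht
    obtain ⟨u, v, w, huv, huw, hvw, rfl⟩ := card_eq_three.mp h3
    simp only [image_insert, image_singleton]
    exact hc u v w (hadj u (by simp) v (by simp) huv) (hadj u (by simp) w (by simp) huw)
      (hadj v (by simp) w (by simp) hvw)
  have hcolors : colorsUsed c ≤ P.parts.card * 2 :=
    calc colorsUsed c = ((P.parts.biUnion id).image c).card := by rw [P.biUnion_parts]; rfl
      _ = (P.parts.biUnion fun t => t.image c).card := by rw [biUnion_image]; rfl
      _ ≤ ∑ t ∈ P.parts, (t.image c).card := card_biUnion_le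
      _ = P.parts.card * 2 := sum_const_nat htwo
  have hcard : Fintype.card V = P.parts.card * 3 := by
    rw [← card_univ, ← P.sum_card_parts]
    exact sum_const_nat fun t ht => (hP t ht).1
  omega

end WormColorings

/-- If `G` has order `n`, maximum degree at most 3, and no connected component
isomorphic to `K₄`, then `W⁺(G) ≥ 2n/3`, with equality if and only if `G` contains
a spanning collection of `n/3` pairwise vertex-disjoint triangles
(i.e. `G` contains `(n/3)·K₃` as a subgraph). -/
theorem wormUpper_ge_two_thirds {V : Type*} [Fintype V] [DecidableEq V]
    (G : SimpleGraph V) [DecidableRel G.Adj] (hdeg : ∀ v : V, G.degree v ≤ 3)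
    (hK4 : ∀ C : G.ConnectedComponent,
      ¬ Nonempty (G.induce C.supp ≃g (⊤ : SimpleGraph (Fin 4)))) :
    ∀ w : ℕ, IsGreatest (wormFeasible G) w →
      2 * Fintype.card V ≤ 3 * w ∧
      (2 * Fintype.card V = 3 * w ↔
        ∃ P : Finpartition (Finset.univ : Finset V),
          ∀ t ∈ P.parts, t.card = 3 ∧ ∀ u ∈ t, ∀ v ∈ t, u ≠ v → G.Adj u v) := by
  intro w hw
  obtain ⟨e, he⟩ :=
    G.exists_isCoherentEdgeChoice hdeg (G.cliqueFree_four_of_degree_le_three hdeg hK4)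
  obtain ⟨𝒯, htri, hdisj, c, hc, hcard⟩ := he.exists_wormColoring
  have hcw : colorsUsed c ≤ w := hw.2 ⟨c, hc, rfl⟩
  have hcover := card_sup_id_eq_mul hdisj fun T hT => (htri T hT).2
  have hle : 𝒯.card * 3 ≤ Fintype.card V := hcover ▸ Finset.card_le_univ _
  refine ⟨by omega, fun heq => ?_, fun ⟨P, hP⟩ => ?_⟩
  · have hsup : 𝒯.sup id = Finset.univ := Finset.eq_univ_of_card _ (by omega)
    refine ⟨(Finpartition.ofPairwiseDisjoint 𝒯 hdisj).copy hsup, fun t ht => ?_⟩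
    have hT := htri t (Finset.mem_of_mem_erase ht)
    exact ⟨hT.2, fun u hu v hv huv => hT.1 hu hv huv⟩
  · obtain ⟨c', hc', rfl⟩ := hw.1
    have := three_mul_colorsUsed_le_of_finpartition hc' P hP
    omega
end

section
/- Let c be a K₃-WORM coloring of a graph G and let {a, b, x, y} be four pairwise adjacent vertices of G (a K₄-subgraph). Then c assigns exactly two distinct colors to {a, b, x, y}, and each of these two colors appears on exactly two of the four vertices. -/
open SimpleGraph

/-!
In a triangle with exactly two colors, exactly one of its three pairs of vertices is
monochromatic. Running through the four triangles of a `K₄`, the only consistent choice is a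
perfect matching of `{a, b, x, y}` into two monochromatic pairs of different colors.
-/

namespace Finset
variable {α : Type*} [DecidableEq α]

theorem card_triple_eq_two_iff (u v w : α) :
    ({u, v, w} : Finset α).card = 2 ↔
      (u = v ∧ v ≠ w) ∨ (u = w ∧ u ≠ v) ∨ (v = w ∧ u ≠ v) := by
  by_cases huv : u = v <;> by_cases huw : u = w <;> by_cases hvw : v = w <;>
    simp_all [card_insert_of_notMem]

theorem pairing_of_card_triples_eq_two {a b x y : α}
    (habx : ({a, b, x} : Finset α).card = 2) (haby : ({a, b, y} : Finset α).card = 2)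
    (haxy : ({a, x, y} : Finset α).card = 2) (hbxy : ({b, x, y} : Finset α).card = 2) :
    (a = b ∧ x = y ∧ a ≠ x) ∨ (a = x ∧ b = y ∧ a ≠ b) ∨ (a = y ∧ b = x ∧ a ≠ b) := by
  rw [card_triple_eq_two_iff] at habx haby haxy hbxy
  grind

theorem two_values_twice_of_card_triples_eq_two {a b x y : α}
    (habx : ({a, b, x} : Finset α).card = 2) (haby : ({a, b, y} : Finset α).card = 2)
    (haxy : ({a, x, y} : Finset α).card = 2) (hbxy : ({b, x, y} : Finset α).card = 2) :
    ({a, b, x, y} : Finset α).card = 2 ∧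
      ∀ z ∈ ({a, b, x, y} : Finset α), Multiset.count z ({a, b, x, y} : Multiset α) = 2 := by
  rcases pairing_of_card_triples_eq_two habx haby haxy hbxy with
    ⟨rfl, rfl, hne⟩ | ⟨rfl, rfl, hne⟩ | ⟨rfl, rfl, hne⟩ <;>
  · refine ⟨by simp [hne, hne.symm], fun z hz => ?_⟩
    simp only [mem_insert, mem_singleton] at hz
    rcases hz with rfl | rfl | rfl | rfl <;> simp [hne, hne.symm]

end Finset

/-- In any K₃-WORM coloring of a graph, a `K₄`-subgraph `{a, b, x, y}` (four pairwise
adjacent vertices) receives exactly two distinct colors, and each of the two colors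
appears on exactly two of the four vertices. -/
theorem worm_on_K4_two_colors_twice {V : Type*} (G : SimpleGraph V) (c : V → ℕ)
    (hc : IsWormColoring G c) (a b x y : V)
    (hab : G.Adj a b) (hax : G.Adj a x) (hay : G.Adj a y)
    (hbx : G.Adj b x) (hby : G.Adj b y) (hxy : G.Adj x y) :
    ({c a, c b, c x, c y} : Finset ℕ).card = 2 ∧
    ∀ col ∈ ({c a, c b, c x, c y} : Finset ℕ),
      Multiset.count col ({c a, c b, c x, c y} : Multiset ℕ) = 2 :=
  Finset.two_values_twice_of_card_triples_eq_two (hc a b x hab hax hbx) (hc a b y hab hay hby)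
    (hc a x y hax hay hxy) (hc b x y hbx hby hxy)
end
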